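/- The dimension of the intersection of Λ²E ⊗ Λ²F ⊗ S with the kernel of the prolongation projection (the skew part of the space of quadratic monogenic spinors) equals s·(C(k,2)·C(n−1,2) − C(k,2)). -/
import Mathlib
open Finset

/-- The skew part of the first prolongation of the tableau of the k-Dirac operator:
coefficient tensors `a : E ⊗ E ⊗ F ⊗ F ⊗ S` (written in the bases of `E = ℂᵏ`, `F = ℂⁿ`)
which are skew-symmetric in the `E`-indices and in the `F`-indices (i.e. lie in
`Λ²E ⊗ Λ²F ⊗ S`) and lie in the kernel of the prolongation projection `Id ⊗ π`, where
`π(ε ⊗ s) = ε·s` is Clifford multiplication by the action `c`. -/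
def skewProlongation (n k : ℕ) (S : Type*) [AddCommGroup S] [Module ℂ S]
    (c : Fin n → S →ₗ[ℂ] S) :
    Submodule ℂ (Fin k → Fin k → Fin n → Fin n → S) where
  carrier := {a | (∀ i j α β, a j i α β = -a i j α β) ∧ (∀ i j α β, a i j β α = -a i j α β) ∧
      (∀ i j α, ∑ β, c β (a i j α β) = 0)}
  add_mem' := by
    rintro a b ⟨h1, h2, h3⟩ ⟨g1, g2, g3⟩
    refine ⟨fun i j α β => ?_, fun i j α β => ?_, fun i j α => ?_⟩
    · simp only [Pi.add_apply]; rw [h1, g1, neg_add]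
    · simp only [Pi.add_apply]; rw [h2, g2, neg_add]
    · simp only [Pi.add_apply, map_add]
      rw [Finset.sum_add_distrib, h3, g3, add_zero]
  zero_mem' := by
    refine ⟨fun i j α β => by simp, fun i j α β => by simp, fun i j α => ?_⟩
    simp
  smul_mem' := by
    rintro r a ⟨h1, h2, h3⟩
    refine ⟨fun i j α β => ?_, fun i j α β => ?_, fun i j α => ?_⟩
    · simp only [Pi.smul_apply]; rw [h1, smul_neg]
    · simp only [Pi.smul_apply]; rw [h2, smul_neg]
    · simp only [Pi.smul_apply, map_smul]
      rw [← Finset.smul_sum, h3, smul_zero]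


-- cardinality of the set of increasing pairs
lemma card_lt_pairs (m : ℕ) :
    ((univ : Finset (Fin m × Fin m)).filter fun p => p.1 < p.2).card = m.choose 2 := by
  classical
  rw [Finset.card_eq_sum_card_fiberwise (f := fun p => p.2)
    (t := univ) (fun x _ => mem_univ _)]
  have h : ∀ j : Fin m,
      (((univ : Finset (Fin m × Fin m)).filter fun p => p.1 < p.2).filter
        (fun p => p.2 = j)).card = j.val := by
    intro j
    have : (((univ : Finset (Fin m × Fin m)).filter fun p => p.1 < p.2).filter
        (fun p => p.2 = j)) = (Finset.Iio j).image (fun i => (i, j)) := by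
      ext p
      simp only [mem_filter, mem_univ, true_and, mem_image, mem_Iio]
      constructor
      · rintro ⟨h1, h2⟩; exact ⟨p.1, h2 ▸ h1, by rw [← h2]⟩
      · rintro ⟨i, hi, rfl⟩; exact ⟨hi, rfl⟩
    rw [this, Finset.card_image_of_injective _ (fun a b hab => (Prod.mk.injEq _ _ _ _ ▸ hab).1),
      Fin.card_Iio]
  simp_rw [h]
  rw [Fin.sum_univ_eq_sum_range (fun i => i) m, Finset.sum_range_id, Nat.choose_two_right]

lemma card_pos_lt_pairs (n : ℕ) [NeZero n] :
    ((univ : Finset (Fin n × Fin n)).filter fun q => 0 < q.1 ∧ q.1 < q.2).card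
      = (n - 1).choose 2 := by
  classical
  rw [Finset.card_eq_sum_card_fiberwise (f := fun p => p.2)
    (t := univ) (fun x _ => mem_univ _)]
  have h : ∀ j : Fin n,
      (((univ : Finset (Fin n × Fin n)).filter fun q => 0 < q.1 ∧ q.1 < q.2).filter
        (fun p => p.2 = j)).card = j.val - 1 := by
    intro j
    have : (((univ : Finset (Fin n × Fin n)).filter fun q => 0 < q.1 ∧ q.1 < q.2).filter
        (fun p => p.2 = j)) = (Finset.Ioo 0 j).image (fun i => (i, j)) := by
      ext p
      simp only [mem_filter, mem_univ, true_and, mem_image, mem_Ioo]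
      constructor
      · rintro ⟨⟨h1, h2⟩, h3⟩; exact ⟨p.1, ⟨h1, h3 ▸ h2⟩, by rw [← h3]⟩
      · rintro ⟨i, hi, rfl⟩; exact ⟨⟨hi.1, hi.2⟩, rfl⟩
    rw [this, Finset.card_image_of_injective _ (fun a b hab => (Prod.mk.injEq _ _ _ _ ▸ hab).1),
      Fin.card_Ioo]
    simp
  simp_rw [h]
  rw [Fin.sum_univ_eq_sum_range (fun i => i - 1) n]
  obtain ⟨m, rfl⟩ : ∃ m, n = m + 1 := ⟨n - 1, (Nat.succ_pred_eq_of_pos (Nat.pos_of_ne_zero (NeZero.ne n))).symm⟩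
  rw [Finset.sum_range_succ']
  simp only [Nat.add_sub_cancel, Nat.zero_sub, add_zero]
  rw [Finset.sum_range_id, Nat.choose_two_right]

lemma half_zero {S : Type*} [AddCommGroup S] [Module ℂ S] {a : S} (h : a + a = 0) : a = 0 := by
  have h2 : (2 : ℂ) • a = 0 := by rw [two_smul]; exact h
  simpa [smul_eq_zero] using h2

lemma half_eq {S : Type*} [AddCommGroup S] [Module ℂ S] {a b : S} (h : a + a = b + b) : a = b := by
  have := half_zero (a := a - b) (by
    rw [show a - b + (a - b) = (a + a) - (b + b) by abel, h, sub_self])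
  exact sub_eq_zero.mp this

section Cliff
variable {n : ℕ} {S : Type*} [AddCommGroup S] [Module ℂ S] (c : Fin n → S →ₗ[ℂ] S)
variable (hc : ∀ α β : Fin n, c α ∘ₗ c β + c β ∘ₗ c α
      = if α = β then (-2 : ℂ) • LinearMap.id else 0)
include hc

lemma cliff_sq (α : Fin n) (x : S) : c α (c α x) = -x := by
  have h := congrArg (fun L => L x) (hc α α)
  simp only [if_pos rfl, eq_self_iff_true, if_true, LinearMap.add_apply, LinearMap.comp_apply,
    LinearMap.smul_apply, LinearMap.id_apply] at h
  refine half_eq ?_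
  rw [h, show (-2 : ℂ) • x = -x + -x by rw [neg_smul, two_smul]; abel]

lemma cliff_anti {α β : Fin n} (h : α ≠ β) (x : S) : c α (c β x) = -(c β (c α x)) := by
  have hh := congrArg (fun L => L x) (hc α β)
  simp only [if_neg h, LinearMap.add_apply, LinearMap.comp_apply, LinearMap.zero_apply] at hh
  exact eq_neg_of_add_eq_zero_left hh

end Cliff

set_option linter.unusedSectionVars false
section Core
variable {n : ℕ} [NeZero n] {S : Type*} [AddCommGroup S] [Module ℂ S]

/-- positive indices -/
def Poss (n : ℕ) [NeZero n] : Finset (Fin n) := univ.filter fun γ => 0 < γ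

/-- increasing pairs of positive indices -/
def PFs (n : ℕ) [NeZero n] : Finset (Fin n × Fin n) :=
  univ.filter fun q => 0 < q.1 ∧ q.1 < q.2

/-- increasing pairs -/
def PEs (k : ℕ) : Finset (Fin k × Fin k) := univ.filter fun p => p.1 < p.2

lemma pos_of_ne_zero' {γ : Fin n} (h : γ ≠ 0) : 0 < γ := by
  rcases Nat.exists_eq_succ_of_ne_zero (NeZero.ne n) with ⟨m, hm⟩
  subst hm
  exact Fin.pos_of_ne_zero h

lemma mem_PFs {q : Fin n × Fin n} : q ∈ PFs n ↔ 0 < q.1 ∧ q.1 < q.2 := by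
  simp [PFs]

lemma sum_split {M : Type*} [AddCommMonoid M] (f : Fin n → M) :
    ∑ β, f β = f 0 + ∑ γ ∈ Poss n, f γ := by
  classical
  rw [← Finset.sum_filter_add_sum_filter_not univ (fun γ : Fin n => 0 < γ) f]
  have : (univ.filter fun γ : Fin n => ¬ 0 < γ) = {0} := by
    ext γ; simp [Fin.pos_iff_ne_zero]
  rw [this]
  simp [add_comm, Poss]

/-- skew extension of a function on increasing positive pairs to the positive square -/
def gext (f : {q // q ∈ PFs n} → S) : Fin n → Fin n → S := fun α β =>
  if h : 0 < α ∧ α < β then f ⟨(α, β), mem_PFs.mpr h⟩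
  else if h' : 0 < β ∧ β < α then -f ⟨(β, α), mem_PFs.mpr h'⟩ else 0

lemma gext_swap (f : {q // q ∈ PFs n} → S) (α β : Fin n) : gext f β α = -gext f α β := by
  unfold gext
  split_ifs with h1 h2 <;> first | simp | (exfalso; omega)

lemma gext_zero_right (f : {q // q ∈ PFs n} → S) (α : Fin n) : gext f α 0 = 0 := by
  unfold gext
  rw [dif_neg (by omega), dif_neg (by omega)]

lemma gext_zero_left (f : {q // q ∈ PFs n} → S) (β : Fin n) : gext f 0 β = 0 := by
  rw [gext_swap, gext_zero_right, neg_zero]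

lemma gext_neg (f : {q // q ∈ PFs n} → S) (α β : Fin n) : gext (-f) α β = -gext f α β := by
  unfold gext
  split_ifs <;> simp

lemma gext_mem (f : {q // q ∈ PFs n} → S) (q : {q // q ∈ PFs n}) :
    gext f q.1.1 q.1.2 = f q := by
  obtain ⟨⟨α, β⟩, hq⟩ := q
  have h := mem_PFs.mp hq
  unfold gext
  rw [dif_pos h]

end Core

section Core2
variable {n : ℕ} [NeZero n] {S : Type*} [AddCommGroup S] [Module ℂ S]
variable (c : Fin n → S →ₗ[ℂ] S)

/-- full extension in the F indices -/
def e2 (f : {q // q ∈ PFs n} → S) : Fin n → Fin n → S := fun α β =>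
  gext f α β + (if β = 0 then c 0 (∑ γ ∈ Poss n, c γ (gext f α γ)) else 0)
    - (if α = 0 then c 0 (∑ γ ∈ Poss n, c γ (gext f β γ)) else 0)

lemma e2_pos (f : {q // q ∈ PFs n} → S) {α β : Fin n} (hα : α ≠ 0) (hβ : β ≠ 0) :
    e2 c f α β = gext f α β := by
  unfold e2; rw [if_neg hβ, if_neg hα]; abel

lemma e2_zero_right (f : {q // q ∈ PFs n} → S) {α : Fin n} (hα : α ≠ 0) :
    e2 c f α 0 = c 0 (∑ γ ∈ Poss n, c γ (gext f α γ)) := by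
  unfold e2; rw [if_pos rfl, if_neg hα, gext_zero_right]; abel

lemma e2_zero_left (f : {q // q ∈ PFs n} → S) {β : Fin n} (hβ : β ≠ 0) :
    e2 c f 0 β = -(c 0 (∑ γ ∈ Poss n, c γ (gext f β γ))) := by
  unfold e2; rw [if_pos rfl, if_neg hβ, gext_zero_left]; abel

lemma e2_zero_zero (f : {q // q ∈ PFs n} → S) : e2 c f 0 0 = 0 := by
  unfold e2; rw [if_pos rfl, gext_zero_left]; abel

lemma e2_swap (f : {q // q ∈ PFs n} → S) (α β : Fin n) : e2 c f β α = -e2 c f α β := by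
  unfold e2
  rw [gext_swap]
  abel

lemma e2_neg (f : {q // q ∈ PFs n} → S) (α β : Fin n) : e2 c (-f) α β = -e2 c f α β := by
  unfold e2
  simp only [gext_neg]
  split_ifs <;> simp [Finset.sum_neg_distrib] <;> abel

variable (hc : ∀ α β : Fin n, c α ∘ₗ c β + c β ∘ₗ c α
      = if α = β then (-2 : ℂ) • LinearMap.id else 0)
include hc

lemma double_sum (b : Fin n → Fin n → S) (hskew : ∀ γ δ, b δ γ = -b γ δ) :
    ∑ γ ∈ Poss n, ∑ δ ∈ Poss n, c γ (c δ (b γ δ))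
      = ∑ q ∈ PFs n, (c q.1 (c q.2 (b q.1 q.2)) + c q.1 (c q.2 (b q.1 q.2))) := by
  classical
  rw [← Finset.sum_product']
  rw [← Finset.sum_filter_add_sum_filter_not (Poss n ×ˢ Poss n)
    (fun p : Fin n × Fin n => p.1 < p.2)]
  have hPF : (Poss n ×ˢ Poss n).filter (fun p : Fin n × Fin n => p.1 < p.2) = PFs n := by
    ext p
    simp only [mem_filter, Finset.mem_product, Poss, PFs, mem_univ, true_and]
    omega
  rw [hPF]
  have hdiag : ∀ γ : Fin n, b γ γ = 0 := fun γ =>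
    half_zero (by nth_rewrite 1 [hskew γ γ]; abel)
  have hgt : ((Poss n ×ˢ Poss n).filter fun p : Fin n × Fin n => ¬ p.1 < p.2)
      = ((Poss n ×ˢ Poss n).filter fun p : Fin n × Fin n => p.2 < p.1)
        ∪ ((Poss n ×ˢ Poss n).filter fun p : Fin n × Fin n => p.1 = p.2) := by
    ext p
    simp only [mem_filter, mem_union, Finset.mem_product, Poss, mem_univ, true_and,
      Fin.lt_def, Fin.ext_iff, Fin.val_zero]
    omega
  rw [hgt, Finset.sum_union (Finset.disjoint_left.mpr (fun p hp1 hp2 => by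
    simp only [mem_filter, Fin.lt_def, Fin.ext_iff] at hp1 hp2; omega))]
  have hdsum : ∑ p ∈ (Poss n ×ˢ Poss n).filter (fun p : Fin n × Fin n => p.1 = p.2),
      c p.1 (c p.2 (b p.1 p.2)) = 0 := by
    refine Finset.sum_eq_zero fun p hp => ?_
    have : p.1 = p.2 := (mem_filter.mp hp).2
    rw [← this, hdiag, map_zero, map_zero]
  rw [hdsum, add_zero]
  have hgsum : ∑ p ∈ (Poss n ×ˢ Poss n).filter (fun p : Fin n × Fin n => p.2 < p.1),
      c p.1 (c p.2 (b p.1 p.2)) = ∑ q ∈ PFs n, c q.1 (c q.2 (b q.1 q.2)) := by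
    refine Finset.sum_nbij' (i := Prod.swap) (j := Prod.swap) ?_ ?_ ?_ ?_ ?_
    · intro p hp
      simp only [mem_filter, Finset.mem_product, Poss, mem_univ, true_and] at hp
      exact mem_PFs.mpr ⟨hp.1.2, hp.2⟩
    · intro q hq
      have h := mem_PFs.mp hq
      simp only [mem_filter, Finset.mem_product, Poss, mem_univ, true_and, Prod.fst_swap,
        Prod.snd_swap]
      exact ⟨⟨lt_trans h.1 h.2, h.1⟩, h.2⟩
    · intro a _; rfl
    · intro a _; rfl
    · intro p hp
      simp only [mem_filter, Finset.mem_product] at hp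
      have hne : p.2 ≠ p.1 := ne_of_lt hp.2
      simp only [Prod.fst_swap, Prod.snd_swap]
      rw [hskew p.2 p.1, map_neg, map_neg, cliff_anti c hc hne]
  rw [hgsum, ← Finset.sum_add_distrib]


/-- forward direction: a row-monogenic skew tensor has vanishing pair sum -/
lemma pairs_sum_eq_zero (b : Fin n → Fin n → S) (hskew : ∀ γ δ, b δ γ = -b γ δ)
    (hrow : ∀ α, ∑ β, c β (b α β) = 0) :
    ∑ q ∈ PFs n, c q.1 (c q.2 (b q.1 q.2)) = 0 := by
  refine half_zero ?_
  rw [← Finset.sum_add_distrib, ← double_sum c hc b hskew]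
  have hinner : ∀ γ ∈ Poss n, ∑ δ ∈ Poss n, c γ (c δ (b γ δ))
      = c 0 (c γ (b γ 0)) := by
    intro γ hγ
    have hγ0 : γ ≠ 0 := by simp [Poss] at hγ; omega
    have h1 : ∑ δ ∈ Poss n, c δ (b γ δ) = -(c 0 (b γ 0)) := by
      have h := hrow γ
      rw [sum_split (fun δ => c δ (b γ δ))] at h
      exact eq_neg_of_add_eq_zero_right h
    rw [← map_sum, h1, map_neg, cliff_anti c hc hγ0, neg_neg]
  rw [Finset.sum_congr rfl hinner, ← map_sum]
  have h2 : ∑ γ ∈ Poss n, c γ (b γ 0) = 0 := by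
    have h3 : ∀ γ ∈ Poss n, c γ (b γ 0) = -(c γ (b 0 γ)) := by
      intro γ _
      rw [hskew 0 γ, map_neg]
    rw [Finset.sum_congr rfl h3]
    have h4 : ∑ γ ∈ Poss n, c γ (b 0 γ) = 0 := by
      have h := hrow 0
      rw [sum_split (fun δ => c δ (b 0 δ))] at h
      have hb00 : b 0 0 = 0 := half_zero (by nth_rewrite 1 [hskew 0 0]; abel)
      rw [hb00, map_zero, zero_add] at h
      exact h
    rw [Finset.sum_neg_distrib, h4, neg_zero]
  rw [h2, map_zero]

/-- backward direction: the extension of a pair tensor with vanishing pair sum is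
row-monogenic -/
lemma rows_of_pairs (f : {q // q ∈ PFs n} → S)
    (H : ∑ q ∈ PFs n, c q.1 (c q.2 (gext f q.1 q.2)) = 0) (α : Fin n) :
    ∑ β, c β (e2 c f α β) = 0 := by
  rw [sum_split (fun β => c β (e2 c f α β))]
  by_cases hα : α = 0
  · subst hα
    rw [e2_zero_zero, map_zero, zero_add]
    have h1 : ∀ γ ∈ Poss n, c γ (e2 c f 0 γ)
        = c 0 (c γ (∑ δ ∈ Poss n, c δ (gext f γ δ))) := by
      intro γ hγ
      have hγ0 : γ ≠ 0 := by simp [Poss] at hγ; omega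
      rw [e2_zero_left c f hγ0, map_neg, cliff_anti c hc hγ0, neg_neg]
    rw [Finset.sum_congr rfl h1, ← map_sum]
    have h2 : ∑ γ ∈ Poss n, c γ (∑ δ ∈ Poss n, c δ (gext f γ δ))
        = ∑ γ ∈ Poss n, ∑ δ ∈ Poss n, c γ (c δ (gext f γ δ)) := by
      exact Finset.sum_congr rfl fun γ _ => map_sum _ _ _
    rw [h2, double_sum c hc _ (gext_swap f), Finset.sum_add_distrib, H, add_zero, map_zero]
  · rw [e2_zero_right c f hα]
    have h1 : ∀ γ ∈ Poss n, c γ (e2 c f α γ) = c γ (gext f α γ) := by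
      intro γ hγ
      have hγ0 : γ ≠ 0 := by simp [Poss] at hγ; omega
      rw [e2_pos c f hα hγ0]
    rw [Finset.sum_congr rfl h1,
      cliff_sq c hc 0 (∑ γ ∈ Poss n, c γ (gext f α γ))]
    rw [← Finset.sum_neg_distrib]
    rw [← Finset.sum_add_distrib]
    refine Finset.sum_eq_zero fun γ _ => by abel


end Core2

section Main
variable {n k : ℕ} [NeZero n] {S : Type*} [AddCommGroup S] [Module ℂ S]
variable (c : Fin n → S →ₗ[ℂ] S)

lemma mem_PEs {p : Fin k × Fin k} : p ∈ PEs k ↔ p.1 < p.2 := by simp [PEs]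

/-- the prolongation projection on pair coordinates -/
def Tmap (k : ℕ) : ({p // p ∈ PEs k} → {q // q ∈ PFs n} → S)
    →ₗ[ℂ] ({p // p ∈ PEs k} → S) where
  toFun d := fun p => ∑ q ∈ (PFs n).attach, c q.1.1 (c q.1.2 (d p q))
  map_add' d e := by
    funext p
    simp only [Pi.add_apply, map_add]
    rw [Finset.sum_add_distrib]
  map_smul' r d := by
    funext p
    simp only [Pi.smul_apply, map_smul, RingHom.id_apply]
    rw [Finset.smul_sum]

/-- restriction to pair coordinates -/
def resMap (n k : ℕ) [NeZero n] (S : Type*) [AddCommGroup S] [Module ℂ S] :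
    (Fin k → Fin k → Fin n → Fin n → S)
      →ₗ[ℂ] ({p // p ∈ PEs k} → {q // q ∈ PFs n} → S) where
  toFun a := fun p q => a p.1.1 p.1.2 q.1.1 q.1.2
  map_add' _ _ := rfl
  map_smul' _ _ := rfl

/-- skew extension in the E indices -/
def e1 (d : {p // p ∈ PEs k} → {q // q ∈ PFs n} → S) (i j : Fin k) :
    {q // q ∈ PFs n} → S :=
  if h : i < j then d ⟨(i, j), mem_PEs.mpr h⟩
  else if h' : j < i then -(d ⟨(j, i), mem_PEs.mpr h'⟩) else 0

lemma e1_swap (d : {p // p ∈ PEs k} → {q // q ∈ PFs n} → S) (i j : Fin k) :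
    e1 d j i = -(e1 d i j) := by
  unfold e1
  rcases lt_trichotomy i j with h | h | h
  · rw [dif_neg (by omega), dif_pos h, dif_pos h]
  · subst h
    rw [dif_neg (by omega), dif_neg (by omega)]
    simp
  · rw [dif_pos h, dif_neg (by omega), dif_pos h]
    simp

variable (hc : ∀ α β : Fin n, c α ∘ₗ c β + c β ∘ₗ c α
      = if α = β then (-2 : ℂ) • LinearMap.id else 0)
include hc

lemma res_mem_ker {a : Fin k → Fin k → Fin n → Fin n → S}
    (ha : a ∈ skewProlongation n k S c) : Tmap c k (resMap n k S a) = 0 := by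
  obtain ⟨h1, h2, h3⟩ := ha
  funext p
  show ∑ q ∈ (PFs n).attach, c q.1.1 (c q.1.2 (a p.1.1 p.1.2 q.1.1 q.1.2)) = 0
  rw [Finset.sum_attach (PFs n)
    (fun q => c q.1 (c q.2 (a p.1.1 p.1.2 q.1 q.2)))]
  exact pairs_sum_eq_zero c hc _ (fun γ δ => h2 _ _ γ δ) (h3 _ _)

lemma res_injective {a : Fin k → Fin k → Fin n → Fin n → S}
    (ha : a ∈ skewProlongation n k S c) (h0 : resMap n k S a = 0) : a = 0 := by
  obtain ⟨h1, h2, h3⟩ := ha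
  have key : ∀ i j : Fin k, i < j → ∀ α β, a i j α β = 0 := by
    intro i j hij
    have hres : ∀ α β : Fin n, 0 < α → α < β → a i j α β = 0 := by
      intro α β hα hαβ
      have := congrFun (congrFun h0 ⟨(i, j), mem_PEs.mpr hij⟩)
        ⟨(α, β), mem_PFs.mpr ⟨hα, hαβ⟩⟩
      exact this
    have hpos : ∀ α β : Fin n, α ≠ 0 → β ≠ 0 → a i j α β = 0 := by
      intro α β hα hβ
      rcases lt_trichotomy α β with h | h | h
      · exact hres α β (pos_of_ne_zero' hα) h
      · subst h; exact half_zero (by nth_rewrite 1 [h2 i j α α]; abel)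
      · rw [h2 i j β α, hres β α (pos_of_ne_zero' hβ) h, neg_zero]
    have hz : ∀ α : Fin n, α ≠ 0 → a i j α 0 = 0 := by
      intro α hα
      have h := h3 i j α
      rw [sum_split (fun β => c β (a i j α β))] at h
      have hrest : ∑ γ ∈ Poss n, c γ (a i j α γ) = 0 := by
        refine Finset.sum_eq_zero fun γ hγ => ?_
        have hγ0 : γ ≠ 0 := by simp [Poss] at hγ; omega
        rw [hpos α γ hα hγ0, map_zero]
      rw [hrest, add_zero] at h
      have := congrArg (c 0) h
      rw [cliff_sq c hc, map_zero] at this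
      exact neg_eq_zero.mp this
    intro α β
    rcases eq_or_ne α 0 with rfl | hα
    · rcases eq_or_ne β 0 with rfl | hβ
      · exact half_zero (by nth_rewrite 1 [h2 i j 0 0]; abel)
      · rw [h2 i j β 0, hz β hβ, neg_zero]
    · rcases eq_or_ne β 0 with rfl | hβ
      · exact hz α hα
      · exact hpos α β hα hβ
  funext i j α β
  show a i j α β = 0
  rcases lt_trichotomy i j with h | h | h
  · exact key i j h α β
  · subst h; exact half_zero (by nth_rewrite 1 [h1 i i α β]; abel)
  · rw [h1 j i α β, key j i h α β, neg_zero]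

lemma ext_mem_and_res {d : {p // p ∈ PEs k} → {q // q ∈ PFs n} → S}
    (hd : Tmap c k d = 0) :
    (fun i j α β => e2 c (e1 d i j) α β) ∈ skewProlongation n k S c ∧
      resMap n k S (fun i j α β => e2 c (e1 d i j) α β) = d := by
  have Hkey : ∀ i j : Fin k,
      ∑ q ∈ PFs n, c q.1 (c q.2 (gext (e1 d i j) q.1 q.2)) = 0 := by
    intro i j
    rw [← Finset.sum_attach (PFs n)
      (fun q => c q.1 (c q.2 (gext (e1 d i j) q.1 q.2)))]
    have : ∀ q ∈ (PFs n).attach,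
        c q.1.1 (c q.1.2 (gext (e1 d i j) q.1.1 q.1.2))
          = c q.1.1 (c q.1.2 (e1 d i j q)) := by
      intro q _
      rw [gext_mem]
    rw [Finset.sum_congr rfl this]
    rcases lt_trichotomy i j with h | h | h
    · rw [show e1 d i j = d ⟨(i, j), mem_PEs.mpr h⟩ from dif_pos h]
      exact congrFun hd ⟨(i, j), mem_PEs.mpr h⟩
    · rw [show e1 d i j = 0 by unfold e1; rw [dif_neg (by omega), dif_neg (by omega)]]
      simp
    · rw [show e1 d i j = -(d ⟨(j, i), mem_PEs.mpr h⟩) from by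
        unfold e1; rw [dif_neg (by omega), dif_pos h]]
      simp only [Pi.neg_apply, map_neg]
      rw [Finset.sum_neg_distrib]
      have h0 : ∑ x ∈ (PFs n).attach,
          c x.1.1 (c x.1.2 (d ⟨(j, i), mem_PEs.mpr h⟩ x)) = 0 :=
        congrFun hd ⟨(j, i), mem_PEs.mpr h⟩
      rw [h0, neg_zero]
  refine ⟨⟨fun i j α β => ?_, fun i j α β => ?_, fun i j α => ?_⟩, ?_⟩
  · show e2 c (e1 d j i) α β = -e2 c (e1 d i j) α β
    rw [e1_swap, e2_neg]
  · show e2 c (e1 d i j) β α = -e2 c (e1 d i j) α β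
    rw [e2_swap]
  · exact rows_of_pairs c hc _ (Hkey i j) α
  · funext p q
    obtain ⟨⟨i, j⟩, hp⟩ := p
    obtain ⟨⟨α, β⟩, hq⟩ := q
    have hij := mem_PEs.mp hp
    have hq' := mem_PFs.mp hq
    show e2 c (e1 d i j) α β = _
    rw [e2_pos c _ (ne_of_gt hq'.1) (ne_of_gt (lt_trans hq'.1 hq'.2)), show e1 d i j = d ⟨(i, j), hp⟩ from dif_pos hij,
      gext_mem (d ⟨(i, j), hp⟩) ⟨(α, β), hq⟩]

lemma Tmap_surjective (hn : 3 ≤ n) : Function.Surjective (Tmap (S := S) c k) := by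
  intro v
  have h1 : (0 : Fin n) < ⟨1, by omega⟩ := by simp [Fin.lt_def]
  have h12 : (⟨1, by omega⟩ : Fin n) < ⟨2, by omega⟩ := by simp [Fin.lt_def]
  set q0 : {q // q ∈ PFs n} :=
    ⟨(⟨1, by omega⟩, ⟨2, by omega⟩), mem_PFs.mpr ⟨h1, h12⟩⟩ with hq0
  refine ⟨fun p q => if q = q0 then
    c ⟨2, by omega⟩ (c ⟨1, by omega⟩ (v p)) else 0, ?_⟩
  funext p
  show ∑ q ∈ (PFs n).attach, _ = v p
  rw [Finset.sum_eq_single q0]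
  · simp only [if_pos rfl]
    show c (⟨1, by omega⟩ : Fin n) (c (⟨2, by omega⟩ : Fin n)
      (c ⟨2, by omega⟩ (c ⟨1, by omega⟩ (v p)))) = v p
    rw [cliff_sq c hc, map_neg, cliff_sq c hc, neg_neg]
  · intro q _ hq
    simp only [if_neg hq, map_zero]
  · intro h; exact absurd (Finset.mem_attach _ _) h

end Main

/-- The dimension of the intersection of `Λ²E ⊗ Λ²F ⊗ S` with the kernel of the prolongation
projection (the skew part of the space of quadratic monogenic spinors of the k-Dirac operator)
equals `s·(C(k,2)·C(n−1,2) − C(k,2))`, where `s = dim S` and the action `c` of the orthonormal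
basis of `F = ℂⁿ` on the spinor module `S` satisfies the Clifford relations. -/
theorem dim_skew_quadratic_monogenic (n k s : ℕ) (hn : 3 ≤ n) (hk : 2 ≤ k)
    (S : Type*) [AddCommGroup S] [Module ℂ S] [FiniteDimensional ℂ S]
    (hs : Module.finrank ℂ S = s) (c : Fin n → S →ₗ[ℂ] S)
    (hc : ∀ α β : Fin n, c α ∘ₗ c β + c β ∘ₗ c α
      = if α = β then (-2 : ℂ) • LinearMap.id else 0) :
    Module.finrank ℂ (skewProlongation n k S c)
      = s * (k.choose 2 * (n - 1).choose 2 - k.choose 2) := by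
  haveI : NeZero n := ⟨by omega⟩
  classical
  set A := skewProlongation n k S c with hA
  set T := Tmap (S := S) c k with hT
  let φ : A →ₗ[ℂ] LinearMap.ker T :=
    LinearMap.codRestrict _ ((resMap n k S).comp A.subtype)
      (fun a => LinearMap.mem_ker.mpr (res_mem_ker c hc a.2))
  have hbij : Function.Bijective φ := by
    constructor
    · intro a b hab
      apply Subtype.ext
      have hmem : (a : Fin k → Fin k → Fin n → Fin n → S) - b ∈ A := A.sub_mem a.2 b.2
      have hval : resMap n k S (a : Fin k → Fin k → Fin n → Fin n → S)
          = resMap n k S (b : Fin k → Fin k → Fin n → Fin n → S) :=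
        congrArg Subtype.val hab
      have hres0 : resMap n k S ((a : Fin k → Fin k → Fin n → Fin n → S) - b) = 0 := by
        rw [map_sub, hval, sub_self]
      exact sub_eq_zero.mp (res_injective c hc hmem hres0)
    · rintro ⟨v, hv⟩
      obtain ⟨hmem, hres⟩ := ext_mem_and_res c hc (LinearMap.mem_ker.mp hv)
      exact ⟨⟨_, hmem⟩, Subtype.ext hres⟩
  have heq := LinearEquiv.finrank_eq (LinearEquiv.ofBijective φ hbij)
  have hsurj : Function.Surjective T := Tmap_surjective c hc hn
  have hrn := LinearMap.finrank_range_add_finrank_ker T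
  rw [LinearMap.range_eq_top.mpr hsurj, finrank_top] at hrn
  have hPE : (PEs k).card = k.choose 2 := card_lt_pairs k
  have hPF : (PFs n).card = (n - 1).choose 2 := card_pos_lt_pairs n
  have hdom : Module.finrank ℂ ({p // p ∈ PEs k} → {q // q ∈ PFs n} → S)
      = (PEs k).card * ((PFs n).card * s) := by
    rw [Module.finrank_pi_fintype ℂ, Finset.sum_const, card_univ, Fintype.card_coe,
      smul_eq_mul]
    congr 1
    rw [Module.finrank_pi_fintype ℂ, Finset.sum_const, card_univ, Fintype.card_coe,
      smul_eq_mul, hs]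
  have hcod : Module.finrank ℂ ({p // p ∈ PEs k} → S) = (PEs k).card * s := by
    rw [Module.finrank_pi_fintype ℂ, Finset.sum_const, card_univ, Fintype.card_coe,
      smul_eq_mul, hs]
  rw [hdom, hcod, hPE, hPF] at hrn
  have hker : Module.finrank ℂ (LinearMap.ker T)
      = k.choose 2 * ((n - 1).choose 2 * s) - k.choose 2 * s := by omega
  rw [heq, hker]
  have ee1 : k.choose 2 * ((n - 1).choose 2 * s) = s * (k.choose 2 * (n - 1).choose 2) := by
    ring
  have ee2 : k.choose 2 * s = s * k.choose 2 := by ring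
  rw [ee1, ee2, ← Nat.mul_sub]
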